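/- Consider the binary classification setting in ℝ²: the data distribution D, rotation angle γ ∈ ℝ with rotated distribution D^(γ), a feed-forward network f as in Definition 4.1 with input dimension d = 2, and the linear correlation loss L^(γ)(θ; g) = E_{(x,y)~D^(γ)}[−y·g(θ;x)]. Let Q^(γ) ∈ O(p) be the parameter rotation induced by U(γ), V₀ ∈ O(p) arbitrary, and define f_γ(θ;x) := f((Q^(γ))ᵀV₀θ; x) and f_0(θ;x) := f(V₀θ; x). Let A be any deterministic first-order algorithm and let θ_t^(γ), θ_t^(0) denote its iterates on the objectives θ ↦ L^(γ)(θ; f_γ) and θ ↦ L^(0)(θ; f_0) respectively, both initialized at θ₀. Then for every t: θ_t^(γ) = θ_t^(0), f_γ(θ_t^(γ); x) = f_0(θ_t^(0); U(γ)ᵀx) for all x ∈ ℝ², and the zero-level sets satisfy {x ∈ ℝ² : f_γ(θ_t^(γ); x) = 0} = {U(γ)x : f_0(θ_t^(0); x) = 0}. -/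
import Mathlib


open MeasureTheory ProbabilityTheory Matrix

/-- Component of the data distribution corresponding to labels `(y, ε)`. -/
noncomputable def Dcomp (μ₁ μ₂ μ₃ σ : ℝ) (y ε : ℝ) : Measure ((ℝ × ℝ) × ℝ) :=
  Measure.map (fun q : ℝ × ℝ => (q, y))
    ((gaussianReal ((μ₁ - μ₃) / 2 + y * (μ₁ + μ₃) / 2) (Real.toNNReal (σ ^ 2))).prod
      (gaussianReal (μ₂ * ε * (y + 1) / 2) (Real.toNNReal (σ ^ 2))))

/-- The data distribution `D` over feature-label pairs `(x, y) ∈ (Fin 2 → ℝ) × {±1}`. -/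
noncomputable def Ddist (μ₁ μ₂ μ₃ σ : ℝ) : Measure ((Fin 2 → ℝ) × ℝ) :=
  (((1 : ENNReal) / 4) • (Dcomp μ₁ μ₂ μ₃ σ 1 1 + Dcomp μ₁ μ₂ μ₃ σ 1 (-1)
    + Dcomp μ₁ μ₂ μ₃ σ (-1) 1 + Dcomp μ₁ μ₂ μ₃ σ (-1) (-1))).map
    (fun q => (![q.1.1, q.1.2], q.2))

/-- The rotation matrix `U(γ)`. -/
noncomputable def rotM (γ : ℝ) : Matrix (Fin 2) (Fin 2) ℝ :=
  !![Real.cos γ, -Real.sin γ; Real.sin γ, Real.cos γ]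
abbrev PIdx (d L : ℕ) (m : ℕ → ℕ) : Type :=
  (Fin (m 1) × Fin d) ⊕
  ((j : Fin L) × (Fin (m (j.1 + 2)) × Fin (m (j.1 + 1)))) ⊕
  ((j : Fin (L + 1)) × Fin (m (j.1 + 1))) ⊕
  Fin (m (L + 1)) ⊕ Unit

/-- The parameter space `ℝᵖ` of the network, presented with coordinates `PIdx d L m`. -/
abbrev PSpace (d L : ℕ) (m : ℕ → ℕ) : Type := PIdx d L m → ℝ

/-- Hidden-layer outputs of the network (Definition 4.1): `hLayer … j` is the output of
hidden layer `j+1`, i.e. `h₁ = x` and `h_{j+1} = σ_{j+1}(W_j h_j + b_j)` entrywise. -/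
noncomputable def hLayer (d L : ℕ) (m : ℕ → ℕ) (act : ℕ → ℝ → ℝ) (θ : PSpace d L m)
    (x : Fin d → ℝ) : (j : ℕ) → Fin (m (j + 1)) → ℝ
  | 0 => fun i =>
      act 1 ((∑ c, θ (Sum.inl (i, c)) * x c)
        + θ (Sum.inr (Sum.inr (Sum.inl ⟨⟨0, Nat.succ_pos L⟩, i⟩))))
  | j + 1 => fun i =>
      if hj : j < L then
        act (j + 2)
          ((∑ c, θ (Sum.inr (Sum.inl ⟨⟨j, hj⟩, (i, c)⟩)) * hLayer d L m act θ x j c)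
            + θ (Sum.inr (Sum.inr (Sum.inl ⟨⟨j + 1, by omega⟩, i⟩))))
      else 0

/-- The (scalar-valued) feed-forward network of Definition 4.1:
`f(θ; x) = W_{L+1} h_L(θ;x) + b_{L+1}`. -/
noncomputable def ffnet (d L : ℕ) (m : ℕ → ℕ) (act : ℕ → ℝ → ℝ) (θ : PSpace d L m)
    (x : Fin d → ℝ) : ℝ :=
  (∑ i, θ (Sum.inr (Sum.inr (Sum.inr (Sum.inl i)))) * hLayer d L m act θ x L i)
    + θ (Sum.inr (Sum.inr (Sum.inr (Sum.inr ()))))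

/-- The parameter rotation `Q^(U)` induced by a data-space matrix `U`: it acts on the
`vec(W₁)` coordinates by the block `Uᵀ ⊗ I_{m₁}` (i.e. `W₁ ↦ W₁U`) and is the identity on
all remaining coordinates. -/
noncomputable def rotQ (d L : ℕ) (m : ℕ → ℕ) (U : Matrix (Fin d) (Fin d) ℝ)
    (θ : PSpace d L m) : PSpace d L m :=
  fun idx =>
    match idx with
    | Sum.inl (i, c) => ∑ c', θ (Sum.inl (i, c')) * U c' c
    | idx => θ idx

/-- The gradient `∇g(θ)` of a function on parameter space, as a vector of partial
derivatives. -/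
noncomputable def gradVec (d L : ℕ) (m : ℕ → ℕ) (g : PSpace d L m → ℝ)
    (θ : PSpace d L m) : PSpace d L m :=
  fun i => fderiv ℝ g θ (Pi.single i 1)

/-- The rotated feature-label distribution `D^(U)`: the law of `(Ux, y)` for `(x,y) ~ D`. -/
noncomputable def rotMeas (d : ℕ) (U : Matrix (Fin d) (Fin d) ℝ)
    (D : Measure ((Fin d → ℝ) × ℝ)) : Measure ((Fin d → ℝ) × ℝ) :=
  D.map (fun q => (U.mulVec q.1, q.2))

/-- The population loss `L(θ; g) = E_{(x,y)~D}[ℓ(y, g(θ;x))]`. -/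
noncomputable def popLoss {d : ℕ} {P : Type*} (D : Measure ((Fin d → ℝ) × ℝ))
    (ℓ : ℝ → ℝ → ℝ) (g : P → (Fin d → ℝ) → ℝ) (θ : P) : ℝ :=
  ∫ q, ℓ q.2 (g θ q.1) ∂D

lemma hLayer_rotQ (d L : ℕ) (m : ℕ → ℕ) (act : ℕ → ℝ → ℝ)
    (U : Matrix (Fin d) (Fin d) ℝ) (θ : PSpace d L m) (x : Fin d → ℝ) :
    ∀ j, hLayer d L m act (rotQ d L m U θ) x j = hLayer d L m act θ (U.mulVec x) j := by
  intro j
  induction j with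
  | zero =>
    funext i
    simp only [hLayer, rotQ]
    congr 2
    simp only [Finset.sum_mul, Matrix.mulVec, dotProduct, Finset.mul_sum]
    rw [Finset.sum_comm]
    exact Finset.sum_congr rfl fun c _ => Finset.sum_congr rfl fun c' _ => mul_assoc _ _ _
  | succ j ih =>
    funext i
    simp only [hLayer, rotQ, ih]

lemma ffnet_rotQ (d L : ℕ) (m : ℕ → ℕ) (act : ℕ → ℝ → ℝ)
    (U : Matrix (Fin d) (Fin d) ℝ) (θ : PSpace d L m) (x : Fin d → ℝ) :
    ffnet d L m act (rotQ d L m U θ) x = ffnet d L m act θ (U.mulVec x) := by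
  simp only [ffnet, rotQ, hLayer_rotQ]

lemma rotM_mul_transpose (γ : ℝ) : rotM γ * (rotM γ)ᵀ = 1 := by
  have h := Real.sin_sq_add_cos_sq γ
  ext i j
  fin_cases i <;> fin_cases j <;>
    simp [rotM, Matrix.mul_apply, Fin.sum_univ_two, Matrix.transpose_apply,
      Matrix.one_apply, Matrix.vecHead, Matrix.vecTail] <;> nlinarith [h]

lemma rotM_transpose_mul (γ : ℝ) : (rotM γ)ᵀ * rotM γ = 1 := by
  have h := Real.sin_sq_add_cos_sq γ
  ext i j
  fin_cases i <;> fin_cases j <;>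
    simp [rotM, Matrix.mul_apply, Fin.sum_univ_two, Matrix.transpose_apply,
      Matrix.one_apply, Matrix.vecHead, Matrix.vecTail] <;> nlinarith [h]

lemma rotM_mulVec_transpose_mulVec (γ : ℝ) (x : Fin 2 → ℝ) :
    (rotM γ).mulVec ((rotM γ)ᵀ.mulVec x) = x := by
  rw [Matrix.mulVec_mulVec, rotM_mul_transpose, Matrix.one_mulVec]

lemma rotM_transpose_mulVec_mulVec (γ : ℝ) (x : Fin 2 → ℝ) :
    (rotM γ)ᵀ.mulVec ((rotM γ).mulVec x) = x := by
  rw [Matrix.mulVec_mulVec, rotM_transpose_mul, Matrix.one_mulVec]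

/-- **EGOP-reparameterized algorithms are equivariant on the binary
classification task.**  In the binary classification setting in `ℝ²` with data
distribution `D`, rotated distribution `D^(γ)` and linear correlation loss
`L^(γ)(θ; g) = E_{D^(γ)}[−y·g(θ;x)]`, let `Q^(γ)` be the parameter rotation induced by
`U(γ)`, `V₀ ∈ O(p)` arbitrary, and `f_γ(θ;x) := f((Q^(γ))ᵀV₀θ; x)`,
`f_0(θ;x) := f(V₀θ; x)`.  For any deterministic first-order algorithm with iterates
`θ^(γ), θ^(0)` on the objectives `L^(γ)(·; f_γ)` and `L^(0)(·; f_0)`, both initialized at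
`θ₀`:  `θ^(γ)_t = θ^(0)_t`, `f_γ(θ^(γ)_t; x) = f_0(θ^(0)_t; U(γ)ᵀx)`, and the zero-level
sets satisfy `{x : f_γ(θ^(γ)_t;x) = 0} = {U(γ)x : f_0(θ^(0)_t;x) = 0}`. -/
theorem stmt_14 (L : ℕ) (m : ℕ → ℕ) (act : ℕ → ℝ → ℝ)
    (μ₁ μ₂ μ₃ σ ω γ : ℝ)
    (hμ : 0 < μ₂) (hω : 1 < ω) (hσ : 0 < σ)
    (hA11 : μ₁ = μ₂ / 2 * (ω - 1 / ω)) (hA13 : μ₃ = μ₂ / 2 * (ω + 1 / ω))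
    (V₀ : Matrix (PIdx 2 L m) (PIdx 2 L m) ℝ) (hV₀ : V₀ᵀ * V₀ = 1)
    -- the network is measurable in its input and the correlation loss is finite:
    (hfm : ∀ θ : PSpace 2 L m, Measurable (fun x : Fin 2 → ℝ => ffnet 2 L m act θ x))
    (hfint : ∀ θ : PSpace 2 L m,
      Integrable (fun q : (Fin 2 → ℝ) × ℝ => -q.2 * ffnet 2 L m act θ q.1)
        (Ddist μ₁ μ₂ μ₃ σ))
    -- a deterministic first-order algorithm:
    (update : (t : ℕ) → (Fin (t + 1) → PSpace 2 L m) → (Fin (t + 1) → PSpace 2 L m) →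
      PSpace 2 L m)
    (θ₀ : PSpace 2 L m) (θγ θ0 : ℕ → PSpace 2 L m)
    (hγ0 : θγ 0 = θ₀) (h00 : θ0 0 = θ₀)
    (hrecγ : ∀ t, θγ (t + 1) = update t (fun τ : Fin (t + 1) => θγ τ.1)
      (fun τ : Fin (t + 1) => gradVec 2 L m
        (popLoss (rotMeas 2 (rotM γ) (Ddist μ₁ μ₂ μ₃ σ)) (fun y z => -y * z)
          (fun θ x => ffnet 2 L m act (rotQ 2 L m (rotM γ)ᵀ (V₀.mulVec θ)) x)) (θγ τ.1)))
    (hrec0 : ∀ t, θ0 (t + 1) = update t (fun τ : Fin (t + 1) => θ0 τ.1)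
      (fun τ : Fin (t + 1) => gradVec 2 L m
        (popLoss (Ddist μ₁ μ₂ μ₃ σ) (fun y z => -y * z)
          (fun θ x => ffnet 2 L m act (V₀.mulVec θ) x)) (θ0 τ.1))) :
    ∀ t : ℕ, θγ t = θ0 t
      ∧ (∀ x : Fin 2 → ℝ,
          ffnet 2 L m act (rotQ 2 L m (rotM γ)ᵀ (V₀.mulVec (θγ t))) x
            = ffnet 2 L m act (V₀.mulVec (θ0 t)) ((rotM γ)ᵀ.mulVec x))
      ∧ {x : Fin 2 → ℝ | ffnet 2 L m act (rotQ 2 L m (rotM γ)ᵀ (V₀.mulVec (θγ t))) x = 0}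
          = (fun x => (rotM γ).mulVec x) ''
              {x : Fin 2 → ℝ | ffnet 2 L m act (V₀.mulVec (θ0 t)) x = 0} := by
  have hφ : Measurable (fun q : (Fin 2 → ℝ) × ℝ => ((rotM γ).mulVec q.1, q.2)) := by
    have hc : Continuous fun x : Fin 2 → ℝ => (rotM γ).mulVec x :=
      (rotM γ).mulVecLin.continuous_of_finiteDimensional
    exact (hc.measurable.comp measurable_fst).prodMk measurable_snd
  have hobj : popLoss (rotMeas 2 (rotM γ) (Ddist μ₁ μ₂ μ₃ σ)) (fun y z => -y * z)
      (fun θ x => ffnet 2 L m act (rotQ 2 L m (rotM γ)ᵀ (V₀.mulVec θ)) x)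
    = popLoss (Ddist μ₁ μ₂ μ₃ σ) (fun y z => -y * z)
      (fun θ x => ffnet 2 L m act (V₀.mulVec θ) x) := by
    funext θ
    have hF : Measurable (fun q : (Fin 2 → ℝ) × ℝ =>
        -q.2 * ffnet 2 L m act (rotQ 2 L m (rotM γ)ᵀ (V₀.mulVec θ)) q.1) :=
      measurable_snd.neg.mul
        ((hfm (rotQ 2 L m (rotM γ)ᵀ (V₀.mulVec θ))).comp measurable_fst)
    simp only [popLoss, rotMeas]
    rw [integral_map hφ.aemeasurable hF.aestronglyMeasurable]
    simp only [ffnet_rotQ, rotM_transpose_mulVec_mulVec]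
  have key : ∀ t, θγ t = θ0 t := by
    intro t
    induction t using Nat.strong_induction_on with
    | _ t ih =>
      match t with
      | 0 => rw [hγ0, h00]
      | t + 1 =>
        rw [hrecγ, hrec0, hobj]
        exact congrArg₂ _ (funext fun τ => ih τ.1 τ.2)
          (funext fun τ => by rw [ih τ.1 τ.2])
  intro t
  refine ⟨key t, ?_, ?_⟩
  · intro x
    rw [key t, ffnet_rotQ]
  · ext x
    simp only [Set.mem_setOf_eq, Set.mem_image]
    rw [key t, ffnet_rotQ]
    constructor
    · intro h
      exact ⟨(rotM γ)ᵀ.mulVec x, h, rotM_mulVec_transpose_mulVec γ x⟩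
    · rintro ⟨x', hx', rfl⟩
      rw [rotM_transpose_mulVec_mulVec]
      exact hx'
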